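/- Let a and b be unit vectors in a complex Hilbert space H. Then for every x ∈ H, ‖⟨x, a⟩a − ⟨x, b⟩b‖² ≤ ‖x‖²·(1 − |⟨a, b⟩|²). -/

import Mathlib

/-!
The operator `T = P_a - P_b`, difference of the orthogonal projections onto `a` and `b`, is
self-adjoint, and a direct computation gives `T² a = c • a` and `T² b = c • b` with
`c = 1 - |⟨a, b⟩|²`. Since `T x ∈ span {a, b}`, this yields `T³ = c • T`, hence
`‖T x‖⁴ = ⟨T² x, x⟩² ≤ ‖T² x‖² ‖x‖² = ⟨T³ x, T x⟩ ‖x‖² = c ‖T x‖² ‖x‖²`.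
-/

open InnerProductSpace RCLike ComplexConjugate

section
variable {𝕜 E : Type*} [RCLike 𝕜] [NormedAddCommGroup E] [InnerProductSpace 𝕜 E]

theorem LinearMap.IsSymmetric.norm_sq_apply_le_of_cube_eq_smul {T : E →ₗ[𝕜] E}
    (hT : T.IsSymmetric) {c : ℝ} (hc : 0 ≤ c) (hcube : ∀ y, T (T (T y)) = (c : 𝕜) • T y)
    (x : E) : ‖T x‖ ^ 2 ≤ c * ‖x‖ ^ 2 := by
  have hle : ‖T x‖ ^ 2 ≤ ‖T (T x)‖ * ‖x‖ :=
    calc ‖T x‖ ^ 2 = re (inner 𝕜 (T (T x)) x) := by rw [hT, norm_sq_eq_re_inner (𝕜 := 𝕜)]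
      _ ≤ ‖inner 𝕜 (T (T x)) x‖ := re_le_norm _
      _ ≤ ‖T (T x)‖ * ‖x‖ := norm_inner_le_norm _ _
  have hsq : ‖T (T x)‖ ^ 2 = c * ‖T x‖ ^ 2 := by
    rw [norm_sq_eq_re_inner (𝕜 := 𝕜), ← hT, hcube, inner_smul_left, conj_ofReal, re_ofReal_mul,
      ← norm_sq_eq_re_inner]
  rcases (sq_nonneg ‖T x‖).eq_or_lt with h0 | hpos
  · rw [← h0]
    positivity
  · refine le_of_mul_le_mul_left ?_ hpos
    calc ‖T x‖ ^ 2 * ‖T x‖ ^ 2 ≤ (‖T (T x)‖ * ‖x‖) ^ 2 := by rw [← sq]; gcongr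
      _ = ‖T x‖ ^ 2 * (c * ‖x‖ ^ 2) := by rw [mul_pow, hsq]; ring

namespace InnerProductSpace

theorem isSymmetric_rankOne_self_sub_rankOne_self (a b : E) :
    ((rankOne 𝕜 a a - rankOne 𝕜 b b : E →L[𝕜] E) : E →ₗ[𝕜] E).IsSymmetric :=
  (isSymmetric_rankOne_self a).sub (isSymmetric_rankOne_self b)

theorem rankOne_self_sub_rankOne_self_sq_apply_left {a b : E} (ha : ‖a‖ = 1) (hb : ‖b‖ = 1) :
    (rankOne 𝕜 a a - rankOne 𝕜 b b) ((rankOne 𝕜 a a - rankOne 𝕜 b b) a)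
      = ((1 - ‖inner 𝕜 a b‖ ^ 2 : ℝ) : 𝕜) • a := by
  have haa : inner 𝕜 a a = (1 : 𝕜) := by simp [ha]
  have hbb : inner 𝕜 b b = (1 : 𝕜) := by simp [hb]
  have hba : inner 𝕜 b a = conj (inner 𝕜 a b) := (inner_conj_symm b a).symm
  rw [ofReal_sub, ofReal_one, ofReal_pow, ← mul_conj]
  simp only [sub_apply, rankOne_apply, map_sub, map_smul, haa, hbb, hba]
  module

theorem rankOne_self_sub_rankOne_self_sq_apply_right {a b : E} (ha : ‖a‖ = 1) (hb : ‖b‖ = 1) :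
    (rankOne 𝕜 a a - rankOne 𝕜 b b) ((rankOne 𝕜 a a - rankOne 𝕜 b b) b)
      = ((1 - ‖inner 𝕜 a b‖ ^ 2 : ℝ) : 𝕜) • b := by
  rw [← neg_sub (rankOne 𝕜 b b)]
  simp only [neg_apply, map_neg, neg_neg]
  rw [rankOne_self_sub_rankOne_self_sq_apply_left hb ha, norm_inner_symm]

theorem rankOne_self_sub_rankOne_self_cube_apply {a b : E} (ha : ‖a‖ = 1) (hb : ‖b‖ = 1)
    (y : E) :
    (rankOne 𝕜 a a - rankOne 𝕜 b b) ((rankOne 𝕜 a a - rankOne 𝕜 b b)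
      ((rankOne 𝕜 a a - rankOne 𝕜 b b) y))
      = ((1 - ‖inner 𝕜 a b‖ ^ 2 : ℝ) : 𝕜) • (rankOne 𝕜 a a - rankOne 𝕜 b b) y := by
  have hy : (rankOne 𝕜 a a - rankOne 𝕜 b b) y = inner 𝕜 a y • a - inner 𝕜 b y • b := rfl
  rw [hy, map_sub, map_sub, map_smul, map_smul, map_smul, map_smul,
    rankOne_self_sub_rankOne_self_sq_apply_left ha hb,
    rankOne_self_sub_rankOne_self_sq_apply_right ha hb, smul_comm _ _ a, smul_comm _ _ b,
    ← smul_sub]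

end InnerProductSpace

end

theorem norm_inner_smul_sub_inner_smul_sq_le
    {H : Type*} [NormedAddCommGroup H] [InnerProductSpace ℂ H]
    (a b : H) (ha : ‖a‖ = 1) (hb : ‖b‖ = 1) (x : H) :
    ‖(inner ℂ a x : ℂ) • a - (inner ℂ b x : ℂ) • b‖ ^ 2
      ≤ ‖x‖ ^ 2 * (1 - ‖(inner ℂ a b : ℂ)‖ ^ 2) := by
  have hab : ‖(inner ℂ a b : ℂ)‖ ≤ 1 := by
    simpa [ha, hb] using norm_inner_le_norm (𝕜 := ℂ) a b
  have hc : 0 ≤ 1 - ‖(inner ℂ a b : ℂ)‖ ^ 2 := sub_nonneg.2 (pow_le_one₀ (norm_nonneg _) hab)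
  rw [mul_comm]
  exact (isSymmetric_rankOne_self_sub_rankOne_self a b).norm_sq_apply_le_of_cube_eq_smul hc
    (rankOne_self_sub_rankOne_self_cube_apply ha hb) x
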